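/- arXiv:1808.05072 — 3 statements merged into one kernel-verified Lean document; each statement's English description precedes it below -/
import Mathlib

section
/- Let L be an n×n symmetric matrix over the field with two elements 𝔽₂ whose diagonal entries are all 1. Then the linear system L·a = 𝟙 (where 𝟙 is the all-ones column vector) has a solution a ∈ 𝔽₂ⁿ. -/
/-!
Over a field of characteristic 2 the off-diagonal terms of `x ⬝ᵥ L *ᵥ x` cancel in pairs when `L` is
symmetric, and `x i ^ 2 = x i` in `𝔽₂`; so with a unit diagonal `x ⬝ᵥ L *ᵥ x = ∑ i, x i`. Hence the
all-ones vector is orthogonal to the left kernel of `L`, and therefore lies in its column space.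
-/

open Finset Matrix

theorem CharTwo.sum_sum_eq_sum_diag {R ι : Type*} [Semiring R] [CharP R 2] [Fintype ι]
    {f : ι → ι → R} (hf : ∀ i j, f i j = f j i) : ∑ i, ∑ j, f i j = ∑ i, f i i := by
  classical
  have hoff : ∑ p ∈ univ.offDiag, f p.1 p.2 = 0 :=
    sum_involution (fun p _ => p.swap) (fun p _ => by simp [hf p.2 p.1, CharTwo.add_self_eq_zero])
      (fun p hp _ => by simpa [Prod.ext_iff, eq_comm] using (mem_offDiag.1 hp).2.2)
      (fun p hp => by simpa [and_comm, eq_comm] using hp) (fun p _ => p.swap_swap)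
  rw [← sum_product', ← diag_union_offDiag,
    sum_union (disjoint_diag_offDiag _), sum_diag, hoff, add_zero]

theorem Matrix.IsSymm.dotProduct_mulVec_self_of_charTwo {R n : Type*} [CommSemiring R] [CharP R 2]
    [Fintype n] {A : Matrix n n R} (hA : A.IsSymm) (x : n → R) :
    x ⬝ᵥ A *ᵥ x = ∑ i, A i i * x i ^ 2 := by
  simp only [dotProduct, mulVec, mul_sum]
  rw [CharTwo.sum_sum_eq_sum_diag fun i j => by rw [hA.apply i j]; ring]
  exact sum_congr rfl fun i _ => by ring

theorem Matrix.exists_mulVec_eq_of_forall_vecMul_eq_zero {K m n : Type*} [Field K] [Fintype m]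
    [Fintype n] (A : Matrix m n K) {v : m → K} (hv : ∀ x, x ᵥ* A = 0 → x ⬝ᵥ v = 0) :
    ∃ a, A *ᵥ a = v := by
  classical
  let B : (m → K) →ₗ[K] (n → K) →ₗ[K] K := toLinearMap₂' K A
  have hB (x : m → K) (y : n → K) : B x y = x ᵥ* A ⬝ᵥ y := by
    rw [← dotProduct_mulVec]; exact toLinearMap₂'_apply' A x y
  have hmem : dotProductEquiv K m v ∈ (LinearMap.ker B).dualAnnihilator := by
    refine (Submodule.mem_dualAnnihilator _).2 fun x hx => ?_
    have hxA : x ᵥ* A = 0 := dotProduct_eq_zero _ fun y => by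
      rw [← hB, LinearMap.mem_ker.1 hx, LinearMap.zero_apply]
    simpa [dotProduct_comm] using hv x hxA
  rw [LinearMap.dualAnnihilator_ker_eq_range_flip] at hmem
  obtain ⟨a, ha⟩ := hmem
  refine ⟨a, (dotProductEquiv K m).injective ?_⟩
  refine ha ▸ LinearMap.ext fun x => ?_
  simp [hB, dotProduct_comm, dotProduct_mulVec]

theorem Matrix.IsSymm.dotProduct_one_eq_zero_of_vecMul_eq_zero {n : Type*} [Fintype n]
    {L : Matrix n n (ZMod 2)} (hL : L.IsSymm) (hdiag : ∀ i, L i i = 1) {x : n → ZMod 2}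
    (hx : x ᵥ* L = 0) : x ⬝ᵥ (fun _ => 1) = 0 :=
  calc x ⬝ᵥ (fun _ => 1) = ∑ i, L i i * x i ^ 2 := by simp [dotProduct, hdiag, ZMod.pow_card]
    _ = x ⬝ᵥ L *ᵥ x := (hL.dotProduct_mulVec_self_of_charTwo x).symm
    _ = 0 := by rw [dotProduct_mulVec, hx, zero_dotProduct]

theorem linear_system_all_ones_solvable (n : ℕ) (L : Matrix (Fin n) (Fin n) (ZMod 2))
    (hsym : L.transpose = L) (hdiag : ∀ i, L i i = 1) :
    ∃ a : Fin n → ZMod 2, L.mulVec a = fun _ => 1 :=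
  L.exists_mulVec_eq_of_forall_vecMul_eq_zero fun _ =>
    Matrix.IsSymm.dotProduct_one_eq_zero_of_vecMul_eq_zero hsym hdiag
end

section
/- Over 𝔽₂, for any symmetric matrix L, every vector a in the kernel of L satisfies aᵀ·L·a = 0, and if additionally all diagonal entries of L are 1 then ∑ᵢ aᵢ = ∑ᵢ Lᵢᵢ·aᵢ² = aᵀLa + 2·(∑_{i<j} Lᵢⱼaᵢaⱼ) = 0, i.e., a has even weight. -/
/-!
Over a ring of characteristic two the quadratic form `x ↦ xᵀ L x` of a symmetric matrix `L` is
additive, because its polarization `xᵀ L y + yᵀ L x = 2 xᵀ L y` vanishes. Hence `aᵀ L a` is the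
sum of the values on the coordinate vectors `aᵢ eᵢ`, namely `∑ᵢ Lᵢᵢ aᵢ²`. Over `𝔽₂` with unit
diagonal, where `aᵢ² = aᵢ`, this is `∑ᵢ aᵢ`, and it vanishes when `L a = 0`.
-/

open Matrix

namespace Matrix.IsSymm

variable {ι R : Type*} [Fintype ι] [CommSemiring R] [CharP R 2] {L : Matrix ι ι R}

theorem add_dotProduct_mulVec_add (hL : L.IsSymm) (x y : ι → R) :
    (x + y) ⬝ᵥ L *ᵥ (x + y) = x ⬝ᵥ L *ᵥ x + y ⬝ᵥ L *ᵥ y := by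
  have hpolar : y ⬝ᵥ L *ᵥ x = x ⬝ᵥ L *ᵥ y := by
    rw [dotProduct_mulVec, ← mulVec_transpose, hL.eq, dotProduct_comm]
  rw [mulVec_add, dotProduct_add, add_dotProduct, add_dotProduct, hpolar,
    add_assoc, ← add_assoc (x ⬝ᵥ L *ᵥ y), CharTwo.add_self_eq_zero, zero_add]

def quadraticAddHom (hL : L.IsSymm) : (ι → R) →+ R where
  toFun x := x ⬝ᵥ L *ᵥ x
  map_zero' := by simp
  map_add' := hL.add_dotProduct_mulVec_add

theorem dotProduct_mulVec_self_eq_sum_diag [DecidableEq ι] (hL : L.IsSymm) (a : ι → R) :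
    a ⬝ᵥ L *ᵥ a = ∑ i, L i i * a i ^ 2 := by
  calc a ⬝ᵥ L *ᵥ a = hL.quadraticAddHom (∑ i, Pi.single i (a i)) := by
        rw [Finset.univ_sum_single]; rfl
    _ = ∑ i, L i i * a i ^ 2 := by
        rw [map_sum]
        refine Finset.sum_congr rfl fun i _ => ?_
        simp only [quadraticAddHom, AddMonoidHom.coe_mk, ZeroHom.coe_mk, single_dotProduct, mulVec,
          dotProduct_single]
        ring

end Matrix.IsSymm

theorem kernel_vector_even_weight (n : ℕ) (L : Matrix (Fin n) (Fin n) (ZMod 2))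
    (hsym : L.transpose = L) (hdiag : ∀ i, L i i = 1)
    (a : Fin n → ZMod 2) (ha : L.mulVec a = 0) :
    dotProduct a (L.mulVec a) = 0 ∧ ∑ i, a i = 0 := by
  have hquad : dotProduct a (L.mulVec a) = 0 := by rw [ha, dotProduct_zero]
  refine ⟨hquad, ?_⟩
  rw [Matrix.IsSymm.dotProduct_mulVec_self_eq_sum_diag hsym] at hquad
  simpa only [hdiag, one_mul, ZMod.pow_card] using hquad
end

section
/- A symmetric matrix over 𝔽₂ with all diagonal entries equal to 1 can be singular, but its kernel is contained in the even-weight hyperplane; equivalently, the orthogonal complement (kernel) of such L meets the coset of odd-weight vectors trivially. -/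
/-!
In characteristic 2 the quadratic form `x ↦ xᵀ A x` of a symmetric matrix is additive, since
the cross terms `xᵀ A y + yᵀ A x = 2 xᵀ A y` vanish; hence `xᵀ A x = ∑ A i i * x i ^ 2`. With unit
diagonal this is `∑ x i ^ 2 = (∑ x i) ^ 2`, and a kernel vector `x` has `(∑ x i) ^ 2 = xᵀ A x = 0`.
-/

open Matrix

namespace Matrix

variable {ι R : Type*} [Fintype ι] [CommRing R] [CharP R 2] {A : Matrix ι ι R}

theorem IsSymm.dotProduct_mulVec_add_self_charTwo (hA : A.IsSymm) (x y : ι → R) :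
    (x + y) ⬝ᵥ A *ᵥ (x + y) = x ⬝ᵥ A *ᵥ x + y ⬝ᵥ A *ᵥ y := by
  have hcross : y ⬝ᵥ A *ᵥ x = x ⬝ᵥ A *ᵥ y := by
    rw [dotProduct_mulVec, dotProduct_comm, ← mulVec_transpose, hA.eq]
  rw [mulVec_add, add_dotProduct, dotProduct_add, dotProduct_add, hcross]
  linear_combination (x ⬝ᵥ A *ᵥ y) * CharTwo.two_eq_zero (R := R)

theorem IsSymm.dotProduct_mulVec_self_charTwo (hA : A.IsSymm) (x : ι → R) :
    x ⬝ᵥ A *ᵥ x = ∑ i, A i i * x i ^ 2 := by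
  classical
  let q : (ι → R) →+ R :=
    { toFun := fun v => v ⬝ᵥ A *ᵥ v
      map_zero' := by simp
      map_add' := hA.dotProduct_mulVec_add_self_charTwo }
  calc x ⬝ᵥ A *ᵥ x = q (∑ i, Pi.single i (x i)) := by rw [Finset.univ_sum_single]; rfl
    _ = ∑ i, A i i * x i ^ 2 := by
      rw [map_sum]
      refine Finset.sum_congr rfl fun i _ => ?_
      simp only [q, AddMonoidHom.coe_mk, ZeroHom.coe_mk, mulVec_single, op_smul_eq_smul,
        dotProduct_smul, single_dotProduct, col_apply, smul_eq_mul]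
      ring

theorem IsSymm.sum_eq_zero_of_mulVec_eq_zero [IsReduced R] (hA : A.IsSymm)
    (hdiag : ∀ i, A i i = 1) {x : ι → R} (hx : A *ᵥ x = 0) : ∑ i, x i = 0 := by
  have hsq : (∑ i, x i) ^ 2 = 0 := by
    simpa [CharTwo.sum_sq, hdiag, hx] using (hA.dotProduct_mulVec_self_charTwo x).symm
  exact IsNilpotent.eq_zero ⟨2, hsq⟩

end Matrix

theorem kernel_le_even_weight_hyperplane (n : ℕ) (L : Matrix (Fin n) (Fin n) (ZMod 2))
    (hsym : L.transpose = L) (hdiag : ∀ i, L i i = 1) :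
    LinearMap.ker (Matrix.mulVecLin L) ≤
      LinearMap.ker (∑ i, LinearMap.proj (R := ZMod 2) (φ := fun _ : Fin n => ZMod 2) i) := by
  intro a ha
  simp only [LinearMap.mem_ker, Matrix.mulVecLin_apply, LinearMap.sum_apply,
    LinearMap.proj_apply] at ha ⊢
  exact IsSymm.sum_eq_zero_of_mulVec_eq_zero hsym hdiag ha
end
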